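/- Let C be an n×n correlation matrix with eigenvalues λ₁ ≥ ... ≥ λₙ, orthonormal eigenbasis v₁,...,vₙ, and weights w_j = ⟨v_j,δ_n⟩². If w₁ ≤ 1/2, then g_n(c) ≤ 1/2 and g_n(c)² ≤ (1/2)·g_n(c²+σ²). -/

import Mathlib

/-!
Writing `C = Vᵀ diag(λ) V` with `V` the orthogonal matrix of rows `vⱼ`, the weights
`wⱼ = ⟨vⱼ, δₙ⟩²` form a probability vector, `∑ λⱼ wⱼ = δₙᵀ C δₙ = n g_n(c)` and
`∑ λⱼ² = ‖C‖_F² = n² g_n(c² + σ²)`. For a nonincreasing nonnegative sequence `μ` and `w₁ ≤ 1/2`,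
`∑ μⱼ wⱼ ≤ w₁ μ₁ + (1 - w₁) μ₂ ≤ (μ₁ + μ₂)/2 ≤ (∑ μⱼ)/2`. With `μ = λ` and `∑ λⱼ = n` this is the
first claim; with `μ = λ²`, after Jensen's `(∑ λⱼ wⱼ)² ≤ ∑ λⱼ² wⱼ`, it is the second.
-/

open Matrix Finset

section Spectral

variable {ι R : Type*} [Fintype ι] [DecidableEq ι] [CommRing R]

lemma eq_transpose_mul_diagonal_mul {C V : Matrix ι ι R} {lam : ι → R} (hV : V * Vᵀ = 1)
    (heig : ∀ j, C *ᵥ V j = lam j • V j) : C = Vᵀ * diagonal lam * V := by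
  have hCV : C * Vᵀ = Vᵀ * diagonal lam := by
    ext i j
    rw [mul_diagonal]
    simpa [mul_apply, mulVec, dotProduct, mul_comm] using congrFun (heig j) i
  calc C = C * (Vᵀ * V) := by rw [mul_eq_one_comm.mp hV, Matrix.mul_one]
    _ = Vᵀ * diagonal lam * V := by rw [← Matrix.mul_assoc, hCV]

lemma dotProduct_mulVec_transpose_mul_diagonal_mul (V : Matrix ι ι R) (lam x : ι → R) :
    x ⬝ᵥ (Vᵀ * diagonal lam * V) *ᵥ x = ∑ j, lam j * (V *ᵥ x) j ^ 2 := by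
  rw [← mulVec_mulVec, ← mulVec_mulVec, dotProduct_mulVec, vecMul_transpose]
  simp only [dotProduct, mulVec_diagonal]
  exact sum_congr rfl fun j _ => by ring

lemma sum_sq_mulVec_of_mul_transpose_eq_one {V : Matrix ι ι R} (hV : V * Vᵀ = 1) (x : ι → R) :
    ∑ j, (V *ᵥ x) j ^ 2 = x ⬝ᵥ x := by
  simpa [mul_eq_one_comm.mp hV] using
    (dotProduct_mulVec_transpose_mul_diagonal_mul V 1 x).symm

lemma trace_transpose_mul_diagonal_mul {V : Matrix ι ι R} (hV : V * Vᵀ = 1) (lam : ι → R) :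
    trace (Vᵀ * diagonal lam * V) = ∑ j, lam j := by
  rw [trace_mul_cycle, hV, Matrix.one_mul, trace_diagonal]

lemma sum_sq_entries_transpose_mul_diagonal_mul {V : Matrix ι ι R} (hV : V * Vᵀ = 1)
    (lam : ι → R) : ∑ i, ∑ k, (Vᵀ * diagonal lam * V) i k ^ 2 = ∑ j, lam j ^ 2 := by
  set A := Vᵀ * diagonal lam * V
  have hA : A * Aᵀ = Vᵀ * diagonal (fun j => lam j * lam j) * V := by
    simp only [A, transpose_mul, transpose_transpose, diagonal_transpose, Matrix.mul_assoc]
    rw [← Matrix.mul_assoc V, hV, Matrix.one_mul, ← Matrix.mul_assoc (diagonal lam),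
      diagonal_mul_diagonal]
  have := trace_mul_cycle Vᵀ (diagonal fun j => lam j * lam j) V
  rw [← hA, hV, Matrix.one_mul, trace_diagonal] at this
  simpa [trace, mul_apply, sq] using this

end Spectral

lemma Matrix.PosSemidef.nonneg_of_mulVec_eq_smul {ι : Type*} [Fintype ι] {C : Matrix ι ι ℝ}
    (hC : C.PosSemidef) {x : ι → ℝ} (hx : x ≠ 0) {μ : ℝ} (h : C *ᵥ x = μ • x) : 0 ≤ μ := by
  have hCx := hC.dotProduct_mulVec_nonneg x
  rw [h, dotProduct_smul, smul_eq_mul] at hCx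
  exact nonneg_of_mul_nonneg_left hCx (dotProduct_star_self_pos_iff.mpr hx)

lemma sum_eq_sum_diag_add_two_mul_sum_lt {ι M : Type*} [Fintype ι] [LinearOrder ι]
    [AddCommMonoid M] (f : ι → ι → M) (hf : ∀ i j, f i j = f j i) :
    ∑ i, ∑ j, f i j = ∑ i, f i i + 2 • ∑ i, ∑ j ∈ univ.filter (· < i), f i j := by
  have hsplit : ∀ i j, f i j = (if j < i then f i j else 0) + (if i = j then f i j else 0)
      + (if i < j then f i j else 0) := by
    intro i j
    rcases lt_trichotomy i j with h | h | h
    · simp [h, h.not_gt, h.ne]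
    · simp [h]
    · simp [h, h.not_gt, h.ne']
  have hupper : ∑ i, ∑ j ∈ univ.filter (i < ·), f i j = ∑ i, ∑ j ∈ univ.filter (· < i), f i j := by
    simp_rw [sum_filter]
    rw [sum_comm]
    simp_rw [hf]
  conv_lhs => enter [2, i, 2, j]; rw [hsplit i j]
  simp only [sum_add_distrib, sum_ite_eq, mem_univ, if_true, ← sum_filter, hupper]
  abel

lemma sum_mul_le_half_sum_of_antitone {n : ℕ} (hn : 2 ≤ n) {μ w : Fin n → ℝ} (hμ : Antitone μ)
    (hμ0 : ∀ j, 0 ≤ μ j) (hw : ∀ j, 0 ≤ w j) (hw1 : ∑ j, w j = 1)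
    (hw0 : w ⟨0, Nat.zero_lt_of_lt hn⟩ ≤ 1 / 2) : ∑ j, μ j * w j ≤ (∑ j, μ j) / 2 := by
  obtain ⟨m, rfl⟩ := Nat.exists_eq_add_of_le' hn
  rw [Fin.sum_univ_succ] at hw1 ⊢
  have htail : ∑ i : Fin (m + 1), μ i.succ * w i.succ ≤ μ 1 * (1 - w 0) := by
    rw [← hw1, add_sub_cancel_left, mul_sum]
    exact sum_le_sum fun i _ => mul_le_mul_of_nonneg_right (hμ (Fin.succ_pos i)) (hw _)
  have hμsum : μ 0 + μ 1 ≤ ∑ j, μ j := by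
    rw [Fin.sum_univ_succ, Fin.sum_univ_succ, Fin.succ_zero_eq_one]
    have : 0 ≤ ∑ i : Fin m, μ i.succ.succ := sum_nonneg fun i _ => hμ0 _
    linarith
  have hμ01 : μ 1 ≤ μ 0 := hμ (Fin.zero_le 1)
  change w 0 ≤ 1 / 2 at hw0
  nlinarith [mul_nonneg (sub_nonneg.2 hμ01) (sub_nonneg.2 hw0)]

lemma sq_sum_mul_le_sum_sq_mul {ι : Type*} (s : Finset ι) {μ w : ι → ℝ} (hw : ∀ j ∈ s, 0 ≤ w j)
    (hw1 : ∑ j ∈ s, w j = 1) : (∑ j ∈ s, μ j * w j) ^ 2 ≤ ∑ j ∈ s, μ j ^ 2 * w j := by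
  simpa [mul_comm] using (even_two.convexOn_pow (𝕜 := ℝ)).map_sum_le hw hw1 (p := μ) (by simp)

lemma sum_mul_le_half_sum_and_sq_le {n : ℕ} (hn : 2 ≤ n) {μ w : Fin n → ℝ} (hμ : Antitone μ)
    (hμ0 : ∀ j, 0 ≤ μ j) (hw : ∀ j, 0 ≤ w j) (hw1 : ∑ j, w j = 1)
    (hw0 : w ⟨0, Nat.zero_lt_of_lt hn⟩ ≤ 1 / 2) :
    ∑ j, μ j * w j ≤ (∑ j, μ j) / 2 ∧ (∑ j, μ j * w j) ^ 2 ≤ (∑ j, μ j ^ 2) / 2 := by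
  refine ⟨sum_mul_le_half_sum_of_antitone hn hμ hμ0 hw hw1 hw0, ?_⟩
  refine (sq_sum_mul_le_sum_sq_mul univ (fun j _ => hw j) hw1).trans ?_
  exact sum_mul_le_half_sum_of_antitone hn (μ := fun j => μ j ^ 2)
    (fun i j hij => pow_le_pow_left₀ (hμ0 j) (hμ hij) 2) (fun j => sq_nonneg _) hw hw1 hw0

lemma const_dotProduct_mulVec_const {ι R : Type*} [Fintype ι] [CommSemiring R]
    (A : Matrix ι ι R) (a : R) :
    (fun _ => a) ⬝ᵥ A *ᵥ (fun _ => a) = a ^ 2 * ∑ i, ∑ k, A i k := by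
  simp only [dotProduct, mulVec, mul_sum, sq]
  exact sum_congr rfl fun i _ => sum_congr rfl fun k _ => by ring

lemma gn_mean_eq {x : ℝ} (hx : x ≠ 0) (hx1 : x - 1 ≠ 0) (L : ℝ) :
    ((x - 1) * ((2 / (x * (x - 1))) * L) + 1) / x = (x + 2 * L) / x / x := by
  field_simp
  ring

/-- If `w₁ ≤ 1/2`, then `g_n(c) ≤ 1/2` and `g_n(c)² ≤ (1/2)·g_n(c²+σ²)`. -/
theorem stmt_14 (n : ℕ) (hn : 2 ≤ n) (C : Matrix (Fin n) (Fin n) ℝ)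
    (hpsd : C.PosSemidef) (hdiag : ∀ i, C i i = 1)
    (lam : Fin n → ℝ) (v : Fin n → (Fin n → ℝ))
    (heig : ∀ j, C.mulVec (v j) = lam j • v j)
    (horth : ∀ j k, ∑ i, v j i * v k i = if j = k then (1 : ℝ) else 0)
    (hmono : ∀ i j : Fin n, i ≤ j → lam j ≤ lam i)
    (hw1 : (∑ i, v ⟨0, by omega⟩ i * (Real.sqrt n)⁻¹) ^ 2 ≤ 1 / 2) :
    (((n : ℝ) - 1) *
        ((2 / ((n : ℝ) * ((n : ℝ) - 1))) *
          ∑ i : Fin n, ∑ j ∈ Finset.univ.filter (fun j => j < i), C i j) + 1) / (n : ℝ) ≤ 1 / 2 ∧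
    ((((n : ℝ) - 1) *
        ((2 / ((n : ℝ) * ((n : ℝ) - 1))) *
          ∑ i : Fin n, ∑ j ∈ Finset.univ.filter (fun j => j < i), C i j) + 1) / (n : ℝ)) ^ 2 ≤
      (1 / 2) * ((((n : ℝ) - 1) *
        ((2 / ((n : ℝ) * ((n : ℝ) - 1))) *
          ∑ i : Fin n, ∑ j ∈ Finset.univ.filter (fun j => j < i), C i j ^ 2) + 1) / (n : ℝ)) := by
  have hn2 : (2 : ℝ) ≤ n := by exact_mod_cast hn
  have hn0 : (n : ℝ) ≠ 0 := by positivity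
  set L₁ := ∑ i : Fin n, ∑ j ∈ univ.filter (· < i), C i j
  set L₂ := ∑ i : Fin n, ∑ j ∈ univ.filter (· < i), C i j ^ 2
  set V : Matrix (Fin n) (Fin n) ℝ := of v
  set δ : Fin n → ℝ := fun _ => (√n)⁻¹
  set w : Fin n → ℝ := fun j => (V *ᵥ δ) j ^ 2
  have hV : V * Vᵀ = 1 := by ext j k; simpa [V, mul_apply, one_apply] using horth j k
  have hC : C = Vᵀ * diagonal lam * V := eq_transpose_mul_diagonal_mul hV heig
  have hsym : ∀ i j, C i j = C j i := fun i j => by simpa using (hpsd.1.apply i j).symm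
  have hlam0 : ∀ j, 0 ≤ lam j := fun j =>
    hpsd.nonneg_of_mulVec_eq_smul (fun h => by simpa [h] using horth j j) (heig j)
  have hδ : (√n)⁻¹ ^ 2 = (n : ℝ)⁻¹ := by rw [inv_pow, Real.sq_sqrt (by positivity)]
  have hw_sum : ∑ j, w j = 1 := by
    simp only [w, sum_sq_mulVec_of_mul_transpose_eq_one hV, δ, dotProduct, ← sq, hδ, sum_const,
      card_univ, Fintype.card_fin, nsmul_eq_mul, mul_inv_cancel₀ hn0]
  have hlam_sum : ∑ j, lam j = n := by
    rw [← trace_transpose_mul_diagonal_mul hV, ← hC]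
    simp [trace, hdiag]
  have hmean : ∑ j, lam j * w j = (n + 2 * L₁) / n := by
    rw [← dotProduct_mulVec_transpose_mul_diagonal_mul, ← hC, const_dotProduct_mulVec_const, hδ,
      sum_eq_sum_diag_add_two_mul_sum_lt _ hsym]
    simp [hdiag, div_eq_inv_mul, L₁]
  have hsq : ∑ j, lam j ^ 2 = n + 2 * L₂ := by
    rw [← sum_sq_entries_transpose_mul_diagonal_mul hV, ← hC,
      sum_eq_sum_diag_add_two_mul_sum_lt _ fun i j => by rw [hsym]]
    simp [hdiag, L₂]
  obtain ⟨hfirst, hsecond⟩ :=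
    sum_mul_le_half_sum_and_sq_le hn hmono hlam0 (fun j => sq_nonneg _) hw_sum hw1
  rw [gn_mean_eq hn0 (by linarith), gn_mean_eq hn0 (by linarith), ← hmean, ← hsq]
  constructor
  · rw [div_le_iff₀ (by positivity)]
    linarith
  · calc _ = (∑ j, lam j * w j) ^ 2 / n ^ 2 := div_pow _ _ _
      _ ≤ (∑ j, lam j ^ 2) / 2 / n ^ 2 := by gcongr
      _ = _ := by ring
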